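/- For every positive integer m, there exists a bipartite graph that is not (2m,m)-choosable. Concretely, the graph obtained from C(2m,m) disjoint 4-cycles by identifying one vertex of each (one 4-cycle for each m-element subset S of {1,...,2m}) admits a 2m-list assignment with no m-fold coloring. -/

import Mathlib

def FoldChoosable {V : Type*} (G : SimpleGraph V) (a b : ℕ) : Prop :=
  ∀ L : V → Finset ℕ, (∀ v, (L v).card = a) →
    ∃ φ : V → Finset ℕ, (∀ v, φ v ⊆ L v) ∧ (∀ v, (φ v).card = b) ∧
      ∀ v w, G.Adj v w → Disjoint (φ v) (φ w)

/-- Vertices: a hub `none`, together with, for each `m`-subset `S` of `{1,…,2m}`,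
three further vertices `(S,0), (S,1), (S,2)` of a 4-cycle through the hub. -/
abbrev V7 (m : ℕ) := Option ({S : Finset ℕ // S ⊆ Finset.Icc 1 (2 * m) ∧ S.card = m} × Fin 3)

/-- The graph formed from `C(2m,m)` disjoint 4-cycles by identifying one vertex of each:
for each `S`, the 4-cycle is `none, (S,0), (S,1), (S,2)`. -/
def G7 (m : ℕ) : SimpleGraph (V7 m) :=
  SimpleGraph.fromRel (fun x y =>
    match x, y with
    | none, some ⟨_, i⟩ => i = 0 ∨ i = 2
    | some ⟨S, i⟩, some ⟨T, j⟩ => S = T ∧ ((i = 0 ∧ j = 1) ∨ (i = 1 ∧ j = 2))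
    | _, _ => False)


/-!
If the hub receives the colour set `S`, its neighbour `(S,0)` with list `A = {1,…,2m}` is forced
to take `A \ S`. The two remaining vertices of that 4-cycle have lists `A - a + b` and `A - c + b`,
with `a ∈ S`, `c ∉ S` and a new colour `b`; after removing the colours of their coloured
neighbours, each is left with only `m - 1` old colours, so both must use `b`, yet they are adjacent.
-/

open Finset

namespace Finset

variable {α : Type*} [DecidableEq α]

theorem card_insert_erase_of_mem_of_notMem {A : Finset α} {a b : α} (ha : a ∈ A) (hb : b ∉ A) :
    (insert b (A.erase a)).card = A.card := by
  rw [card_insert_of_notMem (fun h => hb (mem_of_mem_erase h)), card_erase_add_one ha]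

theorem mem_of_subset_insert_of_card_lt {T U : Finset α} {b : α} (hT : T ⊆ insert b U)
    (hU : U.card < T.card) : b ∈ T := by
  by_contra hb
  exact (card_le_card (subset_insert_iff_of_notMem hb |>.mp hT)).not_gt hU

theorem eq_sdiff_of_disjoint_of_card_le {A S T : Finset α} (hSA : S ⊆ A) (hTA : T ⊆ A)
    (hST : Disjoint S T) (hcard : A.card ≤ S.card + T.card) : T = A \ S := by
  refine eq_of_subset_of_card_le (fun x hx => mem_sdiff.2 ⟨hTA hx, disjoint_right.1 hST hx⟩) ?_
  rw [card_sdiff_of_subset hSA]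
  omega

end Finset

/-- The obstruction on one 4-cycle `v₁ v₂ v₃ v₄` whose vertex `v₁` is coloured by `S`:
`X₀`, `X₁`, `X₂` are the colour sets of `v₂`, `v₃`, `v₄`. -/
theorem not_disjoint_of_fourCycle_coloring {α : Type*} [DecidableEq α]
    {A S X₀ X₁ X₂ : Finset α} {m : ℕ} {a b c : α}
    (hSA : S ⊆ A) (hA : A.card = 2 * m) (hS : S.card = m) (ha : a ∈ S) (hc : c ∈ A \ S)
    (hX₀A : X₀ ⊆ A) (hX₁ : X₁ ⊆ insert b (A.erase a)) (hX₂ : X₂ ⊆ insert b (A.erase c))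
    (hX₀ : X₀.card = m) (hX₁m : X₁.card = m) (hX₂m : X₂.card = m)
    (hSX₀ : Disjoint S X₀) (hX₀X₁ : Disjoint X₀ X₁) (hSX₂ : Disjoint S X₂) :
    ¬ Disjoint X₁ X₂ := by
  have hm : 0 < m := hS ▸ card_pos.2 ⟨a, ha⟩
  have hX₀_eq : X₀ = A \ S := eq_sdiff_of_disjoint_of_card_le hSA hX₀A hSX₀ (by omega)
  have hb₁ : b ∈ X₁ := by
    refine mem_of_subset_insert_of_card_lt (U := S.erase a) (fun x hx => ?_) ?_
    · have hxL := hX₁ hx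
      have hxX₀ : x ∉ A \ S := hX₀_eq ▸ disjoint_right.1 hX₀X₁ hx
      grind
    · rw [card_erase_of_mem ha]
      omega
  have hb₂ : b ∈ X₂ := by
    refine mem_of_subset_insert_of_card_lt (U := (A \ S).erase c) (fun x hx => ?_) ?_
    · have hxL := hX₂ hx
      have hxS := disjoint_right.1 hSX₂ hx
      grind
    · rw [card_erase_of_mem hc, card_sdiff_of_subset hSA]
      omega
  exact not_disjoint_iff.2 ⟨b, hb₁, hb₂⟩

theorem G7_colorable (m : ℕ) : (G7 m).Colorable 2 := by
  refine (SimpleGraph.Coloring.mk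
    (fun v : V7 m => Option.elim v (0 : Fin 2) fun p => if p.2 = 1 then 0 else 1) ?_).colorable
  rintro (_ | ⟨S, i⟩) (_ | ⟨T, j⟩) h <;> simp [G7] at h ⊢ <;> grind

section

variable {m : ℕ} (S : {S : Finset ℕ // S ⊆ Icc 1 (2 * m) ∧ S.card = m})

theorem G7_adj_none_zero : (G7 m).Adj none (some (S, 0)) := by simp [G7]

theorem G7_adj_none_two : (G7 m).Adj none (some (S, 2)) := by simp [G7]

theorem G7_adj_zero_one : (G7 m).Adj (some (S, 0)) (some (S, 1)) := by simp [G7]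

theorem G7_adj_one_two : (G7 m).Adj (some (S, 1)) (some (S, 2)) := by simp [G7]

end

/-- The lists `A`, `A - a + b`, `A - c + b` on the 4-cycle of `S`, with `A = {1,…,2m}`,
`b = 2m + 1`, `a = min S` and `c = min (A \ S)`. -/
noncomputable def G7Lists (m : ℕ) : V7 m → Finset ℕ
  | none => Icc 1 (2 * m)
  | some (_, 0) => Icc 1 (2 * m)
  | some (S, 1) => insert (2 * m + 1) ((Icc 1 (2 * m)).erase (sInf S.1))
  | some (S, 2) => insert (2 * m + 1) ((Icc 1 (2 * m)).erase (sInf (Icc 1 (2 * m) \ S.1 : Finset ℕ)))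

theorem sInf_mem_and_sInf_sdiff_mem {A S : Finset ℕ} (hSA : S ⊆ A) (hS : 0 < S.card)
    (hSA_card : S.card < A.card) : sInf (S : Set ℕ) ∈ S ∧ sInf ((A \ S : Finset ℕ) : Set ℕ) ∈ A \ S := by
  have hSc : 0 < (A \ S).card := by
    rw [card_sdiff_of_subset hSA]
    omega
  exact ⟨(card_pos.1 hS).csInf_mem, (card_pos.1 hSc).csInf_mem⟩

theorem sInf_mem_G7_label {m : ℕ} (hm : 0 < m)
    (S : {S : Finset ℕ // S ⊆ Icc 1 (2 * m) ∧ S.card = m}) :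
    sInf (S.1 : Set ℕ) ∈ S.1 ∧ sInf (Icc 1 (2 * m) \ S.1 : Finset ℕ) ∈ Icc 1 (2 * m) \ S.1 :=
  sInf_mem_and_sInf_sdiff_mem S.2.1 (by rw [S.2.2]; exact hm) (by rw [S.2.2, Nat.card_Icc]; omega)

theorem G7Lists_card {m : ℕ} (hm : 0 < m) (v : V7 m) : (G7Lists m v).card = 2 * m := by
  have hA : (Icc 1 (2 * m)).card = 2 * m := by simp
  have hb : 2 * m + 1 ∉ Icc 1 (2 * m) := by simp
  rcases v with _ | ⟨S, i⟩
  · exact hA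
  obtain ⟨ha, hc⟩ := sInf_mem_G7_label hm S
  fin_cases i
  · exact hA
  · exact (card_insert_erase_of_mem_of_notMem (S.2.1 ha) hb).trans hA
  · exact (card_insert_erase_of_mem_of_notMem (sdiff_subset hc) hb).trans hA

theorem not_foldChoosable_G7 {m : ℕ} (hm : 0 < m) : ¬ FoldChoosable (G7 m) (2 * m) m := by
  intro h
  obtain ⟨φ, hφL, hφcard, hφdisj⟩ := h (G7Lists m) (G7Lists_card hm)
  let S : {S : Finset ℕ // S ⊆ Icc 1 (2 * m) ∧ S.card = m} := ⟨φ none, hφL none, hφcard none⟩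
  obtain ⟨ha, hc⟩ := sInf_mem_G7_label hm S
  exact not_disjoint_of_fourCycle_coloring S.2.1 (by simp) S.2.2 ha hc
    (hφL (some (S, 0))) (hφL (some (S, 1))) (hφL (some (S, 2))) (hφcard _) (hφcard _) (hφcard _)
    (hφdisj _ _ (G7_adj_none_zero S)) (hφdisj _ _ (G7_adj_zero_one S))
    (hφdisj _ _ (G7_adj_none_two S)) (hφdisj _ _ (G7_adj_one_two S))

/-- For every `m ≥ 1` there is a bipartite graph that is not `(2m,m)`-choosable:
the graph `G7 m` is bipartite and not `(2m,m)`-choosable. -/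
theorem stmt_7 (m : ℕ) (hm : 0 < m) :
    (G7 m).Colorable 2 ∧ ¬ FoldChoosable (G7 m) (2 * m) m :=
  ⟨G7_colorable m, not_foldChoosable_G7 hm⟩
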